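/- Let (Θ, 𝒮, Π) be a probability space, (E, ℰ, ν) a σ-finite measure space, and p : Θ × E → [0,∞) jointly measurable with ∫_E p(b,x) ν(dx) = 1 for every b ∈ Θ. Let p₀ : E → (0,∞) be a measurable probability density with respect to ν and let P₀ be the probability measure on E with density p₀. Let B ∈ 𝒮 with Π(B) > 0 and let a > 0 be such that for every b ∈ B: p(b,x) > 0 for ν-a.e. x, ∫ p₀(x) log(p₀(x)/p(b,x)) ν(dx) ≤ a, and ∫ p₀(x) (log(p₀(x)/p(b,x)))² ν(dx) − (∫ p₀(x) log(p₀(x)/p(b,x)) ν(dx))² ≤ a. Assume moreover that (b,x) ↦ log(p₀(x)/p(b,x)) is square-integrable with respect to the product of the normalised restriction Π(·∩B)/Π(B) and P₀. Then for every t > 0, P₀({x ∈ E : ∫_Θ (p(b,x)/p₀(x)) Π(db) < Π(B) e^{-(a+t)}}) ≤ a/t². -/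

import Mathlib

/-!
Let `Z x` be the average, over `Pr` conditioned on `B`, of the log-likelihood ratio
`log (p₀ x / p b x)`. Jensen's inequality for `exp` bounds the evidence at `x` below by
`Pr B * exp (-Z x)`, so on the event in question `Z x > a + t`. By Fubini the `P₀`-mean of `Z` is
the average Kullback–Leibler divergence, at most `a`, and the variance of an average is at most
the average of the variances, again at most `a`; Chebyshev's inequality concludes.
-/

open MeasureTheory ProbabilityTheory

section Jensen

variable {α : Type*} [MeasurableSpace α] {μ : Measure α}

lemma sq_integral_le_integral_sq [IsProbabilityMeasure μ] {g : α → ℝ} (hg : MemLp g 2 μ) :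
    (∫ x, g x ∂μ) ^ 2 ≤ ∫ x, g x ^ 2 ∂μ := by
  have h := variance_nonneg g μ
  rw [variance_eq_sub hg] at h
  simpa only [Pi.pow_apply, sub_nonneg] using h

lemma exp_integral_log_le_integral [IsProbabilityMeasure μ] {g : α → ℝ}
    (hpos : ∀ᵐ x ∂μ, 0 < g x) (hg : Integrable g μ)
    (hlog : Integrable (fun x => Real.log (g x)) μ) :
    Real.exp (∫ x, Real.log (g x) ∂μ) ≤ ∫ x, g x ∂μ := by
  have hexp_log : (fun x => Real.exp (Real.log (g x))) =ᵐ[μ] g := by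
    filter_upwards [hpos] with x hx using Real.exp_log hx
  calc Real.exp (∫ x, Real.log (g x) ∂μ) ≤ ∫ x, Real.exp (Real.log (g x)) ∂μ :=
        convexOn_exp.map_integral_le Real.continuous_exp.continuousOn isClosed_univ
          (.of_forall fun _ => Set.mem_univ _) hlog (hg.congr hexp_log.symm)
    _ = ∫ x, g x ∂μ := integral_congr_ae hexp_log

lemma measureReal_mul_integral_cond_le_integral {s : Set α} {g : α → ℝ} (hg0 : 0 ≤ g)
    (hg : Integrable g μ) : μ.real s * ∫ x, g x ∂μ[|s] ≤ ∫ x, g x ∂μ := by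
  rw [ProbabilityTheory.cond, integral_smul_measure, ENNReal.toReal_inv, smul_eq_mul, ← mul_assoc]
  rcases eq_or_ne (μ.real s) 0 with h | h
  · simpa [h] using integral_nonneg hg0
  · rw [← measureReal_def, mul_inv_cancel₀ h, one_mul]
    exact setIntegral_le_integral hg (.of_forall hg0)

lemma measureReal_mul_exp_integral_log_cond_le [IsFiniteMeasure μ] {s : Set α} (hs : μ s ≠ 0)
    {g : α → ℝ} (hg0 : 0 ≤ g) (hg : Integrable g μ) (hpos : ∀ᵐ x ∂μ[|s], 0 < g x)
    (hlog : Integrable (fun x => Real.log (g x)) μ[|s]) :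
    μ.real s * Real.exp (∫ x, Real.log (g x) ∂μ[|s]) ≤ ∫ x, g x ∂μ := by
  have := cond_isProbabilityMeasure hs
  have hg_cond : Integrable g μ[|s] := hg.restrict.smul_measure (ENNReal.inv_ne_top.2 hs)
  calc μ.real s * Real.exp (∫ x, Real.log (g x) ∂μ[|s]) ≤ μ.real s * ∫ x, g x ∂μ[|s] := by
        gcongr; exact exp_integral_log_le_integral hpos hg_cond hlog
    _ ≤ ∫ x, g x ∂μ := measureReal_mul_integral_cond_le_integral hg0 hg

lemma lt_integral_log_div_of_integral_div_lt [IsFiniteMeasure μ] {s : Set α} (hs : μ s ≠ 0)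
    {f : α → ℝ} {c r : ℝ} (hc : 0 < c) (hf0 : 0 ≤ f) (hf : Integrable (fun x => f x / c) μ)
    (hpos : ∀ᵐ x ∂μ[|s], 0 < f x) (hlog : Integrable (fun x => Real.log (c / f x)) μ[|s])
    (hlt : ∫ x, f x / c ∂μ < μ.real s * Real.exp (-r)) :
    r < ∫ x, Real.log (c / f x) ∂μ[|s] := by
  have hlog_eq : ∀ x, Real.log (f x / c) = -Real.log (c / f x) := fun x => by
    rw [← Real.log_inv, inv_div]
  have hlower := measureReal_mul_exp_integral_log_cond_le hs
    (fun x => div_nonneg (hf0 x) hc.le) hf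
    (by filter_upwards [hpos] with x hx using div_pos hx hc)
    (by simp_rw [hlog_eq]; exact hlog.neg)
  simp only [hlog_eq, integral_neg] at hlower
  have hexp : Real.exp (-∫ x, Real.log (c / f x) ∂μ[|s]) < Real.exp (-r) :=
    lt_of_mul_lt_mul_left (hlower.trans_lt hlt) measureReal_nonneg
  linarith [Real.exp_lt_exp.1 hexp]

end Jensen

lemma integral_withDensity_ofReal {E : Type*} [MeasurableSpace E] {ν : Measure E} {f : E → ℝ}
    (hf : Measurable f) (hf0 : 0 ≤ f) (g : E → ℝ) :
    ∫ x, g x ∂ν.withDensity (fun x => ENNReal.ofReal (f x)) = ∫ x, f x * g x ∂ν := by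
  rw [integral_withDensity_eq_integral_toReal_smul hf.ennreal_ofReal
    (.of_forall fun _ => ENNReal.ofReal_lt_top)]
  simp [ENNReal.toReal_ofReal (hf0 _)]

lemma ae_integrable_of_integral_eq_one {Θ E : Type*} [MeasurableSpace Θ] [MeasurableSpace E]
    {Pr : Measure Θ} [IsFiniteMeasure Pr] {P : Measure E} [SFinite P] {q : Θ → E → ℝ}
    (hq : Measurable (Function.uncurry q)) (hq0 : ∀ b x, 0 ≤ q b x)
    (hq1 : ∀ b, ∫ x, q b x ∂P = 1) : ∀ᵐ x ∂P, Integrable (fun b => q b x) Pr := by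
  have hprod : Integrable (Function.uncurry q) (Pr.prod P) := by
    refine (integrable_prod_iff hq.aestronglyMeasurable).2
      ⟨.of_forall fun b => integrable_of_integral_eq_one (hq1 b), ?_⟩
    simp only [Function.uncurry_apply_pair, Real.norm_of_nonneg (hq0 _ _), hq1]
    exact integrable_const 1
  exact hprod.prod_left_ae

section AverageVariance

variable {α β : Type*} [MeasurableSpace α] [MeasurableSpace β] {μ : Measure α} {ν : Measure β}
  [IsProbabilityMeasure μ] [IsProbabilityMeasure ν] {F : α × β → ℝ}

lemma memLp_two_prod_left_ae (hF : MemLp F 2 (μ.prod ν)) :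
    ∀ᵐ y ∂ν, MemLp (fun x => F (x, y)) 2 μ := by
  filter_upwards [(hF.integrable one_le_two).prod_left_ae, hF.integrable_sq.prod_left_ae]
    with y h1 h2
  exact (memLp_two_iff_integrable_sq h1.aestronglyMeasurable).2 h2

lemma memLp_two_prod_right_ae (hF : MemLp F 2 (μ.prod ν)) :
    ∀ᵐ x ∂μ, MemLp (fun y => F (x, y)) 2 ν := by
  filter_upwards [(hF.integrable one_le_two).prod_right_ae, hF.integrable_sq.prod_right_ae]
    with x h1 h2
  exact (memLp_two_iff_integrable_sq h1.aestronglyMeasurable).2 h2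

lemma memLp_two_integral_prod_right (hF : MemLp F 2 (μ.prod ν)) :
    MemLp (fun y => ∫ x, F (x, y) ∂μ) 2 ν := by
  have hZ := (hF.integrable one_le_two).integral_prod_right.aestronglyMeasurable
  refine (memLp_two_iff_integrable_sq hZ).2 <| hF.integrable_sq.integral_prod_right.mono'
    (hZ.pow 2) ?_
  filter_upwards [memLp_two_prod_left_ae hF] with y hy
  rw [Real.norm_of_nonneg (sq_nonneg _)]
  exact sq_integral_le_integral_sq hy

lemma memLp_two_integral_prod_left (hF : MemLp F 2 (μ.prod ν)) :
    MemLp (fun x => ∫ y, F (x, y) ∂ν) 2 μ := by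
  have hm := (hF.integrable one_le_two).integral_prod_left.aestronglyMeasurable
  refine (memLp_two_iff_integrable_sq hm).2 <| hF.integrable_sq.integral_prod_left.mono'
    (hm.pow 2) ?_
  filter_upwards [memLp_two_prod_right_ae hF] with x hx
  rw [Real.norm_of_nonneg (sq_nonneg _)]
  exact sq_integral_le_integral_sq hx

lemma variance_integral_le_integral_variance (hF : MemLp F 2 (μ.prod ν)) :
    variance (fun y => ∫ x, F (x, y) ∂μ) ν ≤ ∫ x, variance (fun y => F (x, y)) ν ∂μ := by
  set m : α → ℝ := fun x => ∫ y, F (x, y) ∂ν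
  set Z : β → ℝ := fun y => ∫ x, F (x, y) ∂μ
  have hm := memLp_two_integral_prod_left hF
  have hmean : ∫ y, Z y ∂ν = ∫ x, m x ∂μ :=
    (integral_integral_swap (f := fun x y => F (x, y)) (hF.integrable one_le_two)).symm
  have hm_fst : MemLp (fun q : α × β => m q.1) 2 (μ.prod ν) :=
    hm.comp_measurePreserving (measurePreserving_fst (μ := μ) (ν := ν))
  have hG : Integrable (fun q : α × β => (F q - m q.1) ^ 2) (μ.prod ν) :=
    (hF.sub hm_fst).integrable_sq
  calc variance Z ν = ∫ y, (Z y - ∫ y, Z y ∂ν) ^ 2 ∂ν :=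
        variance_eq_integral (memLp_two_integral_prod_right hF).aemeasurable
    _ ≤ ∫ y, ∫ x, (F (x, y) - m x) ^ 2 ∂μ ∂ν := by
        refine integral_mono_of_nonneg (.of_forall fun _ => sq_nonneg _)
          hG.integral_prod_right ?_
        filter_upwards [memLp_two_prod_left_ae hF] with y hy
        have hcentre : Z y - ∫ y, Z y ∂ν = ∫ x, (F (x, y) - m x) ∂μ := by
          rw [integral_sub (hy.integrable one_le_two) (hm.integrable one_le_two), hmean]
        rw [hcentre]
        exact sq_integral_le_integral_sq (hy.sub hm)
    _ = ∫ x, ∫ y, (F (x, y) - m x) ^ 2 ∂ν ∂μ :=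
        (integral_integral_swap (f := fun x y => (F (x, y) - m x) ^ 2) hG).symm
    _ = ∫ x, variance (fun y => F (x, y)) ν ∂μ := by
        refine integral_congr_ae ?_
        filter_upwards [memLp_two_prod_right_ae hF] with x hx
        exact (variance_eq_integral hx.aemeasurable).symm

lemma meas_lt_integral_prod_le (hF : MemLp F 2 (μ.prod ν)) {m v t : ℝ}
    (hmean : ∀ᵐ x ∂μ, ∫ y, F (x, y) ∂ν ≤ m)
    (hvar : ∀ᵐ x ∂μ, variance (fun y => F (x, y)) ν ≤ v) (ht : 0 < t) :
    ν {y | m + t < ∫ x, F (x, y) ∂μ} ≤ ENNReal.ofReal (v / t ^ 2) := by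
  set Z : β → ℝ := fun y => ∫ x, F (x, y) ∂μ
  have hZmean : ∫ y, Z y ∂ν ≤ m := by
    rw [← integral_integral_swap (f := fun x y => F (x, y)) (hF.integrable one_le_two)]
    refine (integral_mono_ae (hF.integrable one_le_two).integral_prod_left
      (integrable_const m) hmean).trans_eq ?_
    simp
  have hZvar : variance Z ν ≤ v := by
    refine (variance_integral_le_integral_variance hF).trans <|
      (integral_mono_of_nonneg (.of_forall fun _ => variance_nonneg _ _)
        (integrable_const v) hvar).trans_eq ?_
    simp
  calc ν {y | m + t < Z y} ≤ ν {y | t ≤ |Z y - ∫ y, Z y ∂ν|} := by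
        refine measure_mono fun y hy => ?_
        simp only [Set.mem_ofPred_eq] at hy ⊢
        exact le_abs.2 (.inl (by linarith))
    _ ≤ ENNReal.ofReal (variance Z ν / t ^ 2) :=
        meas_ge_le_variance_div_sq (memLp_two_integral_prod_right hF) ht
    _ ≤ ENNReal.ofReal (v / t ^ 2) := by gcongr

end AverageVariance

theorem statement5 {Θ E : Type*} [MeasurableSpace Θ] [MeasurableSpace E]
    (Pr : Measure Θ) [IsProbabilityMeasure Pr]
    (ν : Measure E)
    (p : Θ → E → ℝ) (hpmeas : Measurable (Function.uncurry p))
    (hpnn : ∀ b x, 0 ≤ p b x)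
    (hpdens : ∀ b, ∫ x, p b x ∂ν = 1)
    (p₀ : E → ℝ) (hp₀meas : Measurable p₀) (hp₀pos : ∀ x, 0 < p₀ x)
    (P₀ : Measure E) [IsProbabilityMeasure P₀]
    (hP₀ : P₀ = ν.withDensity fun x => ENNReal.ofReal (p₀ x))
    (B : Set Θ) (hB : MeasurableSet B) (hPrB : 0 < Pr B)
    (a : ℝ)
    (hpos : ∀ b ∈ B, ∀ᵐ x ∂ν, 0 < p b x)
    (hKL : ∀ b ∈ B, ∫ x, p₀ x * Real.log (p₀ x / p b x) ∂ν ≤ a)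
    (hVar : ∀ b ∈ B, ∫ x, p₀ x * (Real.log (p₀ x / p b x)) ^ 2 ∂ν
        - (∫ x, p₀ x * Real.log (p₀ x / p b x) ∂ν) ^ 2 ≤ a)
    (Pr' : Measure Θ) [IsProbabilityMeasure Pr']
    (hPr' : Pr' = (Pr B)⁻¹ • Pr.restrict B)
    (hsq : MemLp (fun q : Θ × E => Real.log (p₀ q.2 / p q.1 q.2)) 2 (Pr'.prod P₀)) :
    ∀ t : ℝ, 0 < t →
      P₀ {x | ∫ b, p b x / p₀ x ∂Pr < (Pr B).toReal * Real.exp (-(a + t))}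
        ≤ ENNReal.ofReal (a / t ^ 2) := by
  intro t ht
  rw [show (Pr B)⁻¹ • Pr.restrict B = Pr[|B] from rfl] at hPr'
  subst hPr'
  have hP₀ν : ∀ g : E → ℝ, ∫ x, g x ∂P₀ = ∫ x, p₀ x * g x ∂ν := fun g => by
    rw [hP₀, integral_withDensity_ofReal hp₀meas fun x => (hp₀pos x).le]
  have hB_ae : ∀ᵐ b ∂Pr[|B], b ∈ B := ae_cond_mem hB
  have hmean : ∀ᵐ b ∂Pr[|B], ∫ x, Real.log (p₀ x / p b x) ∂P₀ ≤ a := by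
    filter_upwards [hB_ae] with b hb using (hP₀ν _).trans_le (hKL b hb)
  have hvar : ∀ᵐ b ∂Pr[|B], variance (fun x => Real.log (p₀ x / p b x)) P₀ ≤ a := by
    filter_upwards [hB_ae, memLp_two_prod_right_ae hsq] with b hb hsec
    rw [variance_eq_sub hsec]
    simpa only [Pi.pow_apply, hP₀ν] using hVar b hb
  refine (measure_mono_ae ?_).trans (meas_lt_integral_prod_le hsq hmean hvar ht)
  have hpos' : ∀ᵐ x ∂P₀, ∀ᵐ b ∂Pr[|B], 0 < p b x := by
    refine (Measure.ae_ae_comm (p := fun b x => 0 < p b x)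
      (measurableSet_lt measurable_const hpmeas)).1 ?_
    filter_upwards [hB_ae] with b hb
    exact (hP₀ ▸ withDensity_absolutelyContinuous ν _ : P₀ ≪ ν).ae_le (hpos b hb)
  have hint : ∀ᵐ x ∂P₀, Integrable (fun b => p b x / p₀ x) Pr := by
    refine ae_integrable_of_integral_eq_one (hpmeas.div (hp₀meas.comp measurable_snd))
      (fun b x => div_nonneg (hpnn b x) (hp₀pos x).le) fun b => ?_
    simpa only [hP₀ν, mul_div_cancel₀ _ (hp₀pos _).ne'] using hpdens b
  filter_upwards [hint, hpos', (hsq.integrable one_le_two).prod_left_ae]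
    with x hx hpx hlog hev
  exact lt_integral_log_div_of_integral_div_lt hPrB.ne' (hp₀pos x) (hpnn · x) hx hpx hlog hev
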